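/- The (α,β)-completion algorithm terminates after at most n(n−1)/2 iterations, and its output is an (α,β)-spanner of G. More precisely: consider any sequence of subgraphs H_0 ⊆ H_1 ⊆ ⋯ of G where H_{m+1} is obtained from H_m by picking a pair (x,y) with dist_{H_m}(x,y) > α·dist_G(x,y) + β·W_max(G), a shortest x–y path P_{x,y} in G, a minimal α-segmentation S of P_{x,y} with respect to H_m, and setting H_{m+1} = H_m ∪ E_α(S,H_m). Then no pair (x,y) can be picked in two different iterations (so the process stops after at most n(n−1)/2 iterations), and the final graph satisfies dist_H(u,v) ≤ α·dist_G(u,v) + β·W_max(G) for all u,v. -/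

import Mathlib

/- Weighted graphs: a `SimpleGraph V` together with a symmetric weight function
`w : V → V → ℝ≥0` that is positive on edges.  The weight of a walk is the sum of
its edge weights, and `wDist G w u v` is the shortest-path distance in `G`
(`∞` if `u` and `v` are not connected). -/

open scoped ENNReal

noncomputable def walkWeight {V : Type*} {G : SimpleGraph V} (w : V → V → NNReal)
    {u v : V} (p : G.Walk u v) : ℝ≥0∞ :=
  (p.darts.map fun d => (w d.toProd.1 d.toProd.2 : ℝ≥0∞)).sum

/-- Shortest-path distance in `G` w.r.t. the weights `w`. -/
noncomputable def wDist {V : Type*} (G : SimpleGraph V) (w : V → V → NNReal) (u v : V) : ℝ≥0∞ :=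
  ⨅ p : G.Walk u v, walkWeight w p

open Classical in
/-- `Wmax G w` is the maximum edge weight of `G`. -/
noncomputable def Wmax {V : Type*} [Fintype V] (G : SimpleGraph V) (w : V → V → NNReal) : NNReal :=
  Finset.univ.sup fun p : V × V => if G.Adj p.1 p.2 then w p.1 p.2 else 0

/-- `x 0, x 1, …, x t` is a shortest path in `G`: consecutive vertices are adjacent and
the distance in `G` between any two of its vertices is the weight of the subpath
between them (every subpath of a shortest path is shortest). -/
def IsShortestPath {V : Type*} (G : SimpleGraph V) (w : V → V → NNReal)
    (t : ℕ) (x : ℕ → V) : Prop :=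
  (∀ i, i < t → G.Adj (x i) (x (i + 1))) ∧
  (∀ i j, i ≤ j → j ≤ t →
    wDist G w (x i) (x j) = ∑ m ∈ Finset.Ico i j, (w (x m) (x (m + 1)) : ℝ≥0∞))

/-- An `α`-segmentation of the path `x 0, …, x t` w.r.t. `H`: indices
`0 = idx 0 < idx 1 < ⋯ < idx s = t` such that every segment of length `≥ 2`
has stretch at most `α` in `H`. -/
def IsSeg {V : Type*} (G H : SimpleGraph V) (w : V → V → NNReal) (α : ℝ≥0∞)
    (x : ℕ → V) (t s : ℕ) (idx : ℕ → ℕ) : Prop :=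
  idx 0 = 0 ∧ idx s = t ∧ (∀ j, j < s → idx j < idx (j + 1)) ∧
  (∀ j, j < s → 2 ≤ idx (j + 1) - idx j →
    wDist H w (x (idx j)) (x (idx (j + 1))) ≤ α * wDist G w (x (idx j)) (x (idx (j + 1))))

/-- A minimal `α`-segmentation: no consecutive run of segments can be merged into a
single segment while remaining an `α`-segmentation, i.e. the endpoints of any union of
at least two consecutive segments have stretch `> α` in `H`. -/
def IsMinimalSeg {V : Type*} (G H : SimpleGraph V) (w : V → V → NNReal) (α : ℝ≥0∞)
    (x : ℕ → V) (t s : ℕ) (idx : ℕ → ℕ) : Prop :=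
  IsSeg G H w α x t s idx ∧
  ∀ a b, a + 2 ≤ b → b ≤ s →
    α * wDist G w (x (idx a)) (x (idx b)) < wDist H w (x (idx a)) (x (idx b))

/-- `E_α(S,H)`: the edges corresponding to single-edge segments whose endpoints have
stretch `> α` in `H`. -/
def segEdges {V : Type*} (H : SimpleGraph V) (w : V → V → NNReal) (α : ℝ≥0∞)
    (x : ℕ → V) (s : ℕ) (idx : ℕ → ℕ) : Set (Sym2 V) :=
  {e | ∃ j, j < s ∧ idx (j + 1) = idx j + 1 ∧
      e = s(x (idx j), x (idx j + 1)) ∧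
      α * (w (x (idx j)) (x (idx j + 1)) : ℝ≥0∞) < wDist H w (x (idx j)) (x (idx j + 1))}


/-!
Each iteration repairs the pair it picks. In a segmentation of the shortest `p`–`q` path,
every segment with at least two edges is already `α`-stretched in `H`, and every single-edge
segment is either `α`-stretched in `H` or lies in `E_α(S,H)`; chaining the segments with the
triangle inequality gives `dist_{H'}(p,q) ≤ α·dist_G(p,q)`. Distances only decrease as edges
are added, so a repaired pair never violates the target again and cannot be picked twice:
iterations inject into the `n(n-1)/2` unordered pairs of distinct vertices.
-/

section WeightedDistance

variable {V : Type*} {G H H' : SimpleGraph V} {w : V → V → NNReal} {u v x : V}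

lemma wDist_le_walkWeight (p : G.Walk u v) : wDist G w u v ≤ walkWeight w p := iInf_le _ p

@[simp]
lemma wDist_self : wDist G w u u = 0 :=
  nonpos_iff_eq_zero.mp <| (wDist_le_walkWeight .nil).trans_eq (by simp [walkWeight])

lemma wDist_le_of_adj (h : G.Adj u v) : wDist G w u v ≤ w u v :=
  (wDist_le_walkWeight (.cons h .nil)).trans_eq (by simp [walkWeight])

lemma walkWeight_append (p : G.Walk u v) (q : G.Walk v x) :
    walkWeight w (p.append q) = walkWeight w p + walkWeight w q := by
  simp [walkWeight, SimpleGraph.Walk.darts_append]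

lemma wDist_triangle : wDist G w u x ≤ wDist G w u v + wDist G w v x := by
  simp only [wDist, ENNReal.iInf_add, ENNReal.add_iInf]
  exact le_iInf₂ fun q p => (wDist_le_walkWeight (p.append q)).trans_eq (walkWeight_append p q)

lemma walkWeight_mapLe (h : H ≤ H') (p : H.Walk u v) :
    walkWeight w (p.mapLe h) = walkWeight w p := by
  simp [walkWeight, SimpleGraph.Walk.mapLe, SimpleGraph.Walk.darts_map, Function.comp_def]

lemma wDist_anti (h : H ≤ H') : wDist H' w u v ≤ wDist H w u v :=
  le_iInf fun p => (wDist_le_walkWeight (p.mapLe h)).trans_eq (walkWeight_mapLe h p)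

lemma walkWeight_reverse (hw : ∀ u v, w u v = w v u) (p : G.Walk u v) :
    walkWeight w p.reverse = walkWeight w p := by
  simp [walkWeight, SimpleGraph.Walk.darts_reverse, List.sum_reverse, Function.comp_def,
    hw _ (Prod.fst _)]

lemma wDist_comm (hw : ∀ u v, w u v = w v u) : wDist G w u v = wDist G w v u := by
  have key : ∀ a b, wDist G w a b ≤ wDist G w b a := fun a b =>
    le_iInf fun p => (wDist_le_walkWeight p.reverse).trans_eq (walkWeight_reverse hw p)
  exact (key u v).antisymm (key v u)

end WeightedDistance

section Completion

variable {V : Type*} {G H : SimpleGraph V} {w : V → V → NNReal} {α : ℝ≥0∞}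
  {x : ℕ → V} {t s : ℕ} {idx : ℕ → ℕ}

lemma IsShortestPath.wDist_add_wDist (hx : IsShortestPath G w t x) {a b c : ℕ}
    (hab : a ≤ b) (hbc : b ≤ c) (hc : c ≤ t) :
    wDist G w (x a) (x b) + wDist G w (x b) (x c) = wDist G w (x a) (x c) := by
  rw [hx.2 a b hab (hbc.trans hc), hx.2 b c hbc hc, hx.2 a c (hab.trans hbc) hc,
    Finset.sum_Ico_consecutive _ hab hbc]

lemma IsShortestPath.wDist_succ (hx : IsShortestPath G w t x) {i : ℕ} (hi : i < t) :
    wDist G w (x i) (x (i + 1)) = w (x i) (x (i + 1)) := by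
  simp [hx.2 i (i + 1) i.le_succ hi]

lemma IsSeg.idx_le (hS : IsSeg G H w α x t s idx) {j : ℕ} (hj : j ≤ s) : idx j ≤ t :=
  hS.2.1 ▸ (strictMonoOn_Iic_of_lt_succ hS.2.2.1).monotoneOn
    (Set.mem_Iic.2 hj) (Set.mem_Iic.2 le_rfl) hj

lemma IsSeg.wDist_sup_segEdges_le (hα : 1 ≤ α) (hx : IsShortestPath G w t x)
    (hS : IsSeg G H w α x t s idx) {j : ℕ} (hj : j < s) :
    wDist (H ⊔ SimpleGraph.fromEdgeSet (segEdges H w α x s idx)) w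
        (x (idx j)) (x (idx (j + 1))) ≤ α * wDist G w (x (idx j)) (x (idx (j + 1))) := by
  have hH := wDist_anti (w := w) (u := x (idx j)) (v := x (idx (j + 1)))
    (le_sup_left (a := H) (b := SimpleGraph.fromEdgeSet (segEdges H w α x s idx)))
  have hlt := hS.2.2.1 j hj
  by_cases hlong : 2 ≤ idx (j + 1) - idx j
  · exact hH.trans (hS.2.2.2 j hj hlong)
  have hsucc : idx (j + 1) = idx j + 1 := by omega
  have hjt : idx j < t := by have := hS.idx_le (j := j + 1) hj; omega
  rw [hsucc] at hH ⊢
  rw [hx.wDist_succ hjt]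
  by_cases hstretch :
      α * w (x (idx j)) (x (idx j + 1)) < wDist H w (x (idx j)) (x (idx j + 1))
  · have hadj : (H ⊔ SimpleGraph.fromEdgeSet (segEdges H w α x s idx)).Adj
        (x (idx j)) (x (idx j + 1)) :=
      Or.inr ⟨⟨j, hj, hsucc, rfl, hstretch⟩, (hx.1 _ hjt).ne⟩
    exact (wDist_le_of_adj hadj).trans (le_mul_of_one_le_left zero_le hα)
  · exact hH.trans (not_lt.mp hstretch)

lemma IsSeg.wDist_sup_segEdges_endpoints_le (hα : 1 ≤ α) (hx : IsShortestPath G w t x)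
    (hS : IsSeg G H w α x t s idx) :
    wDist (H ⊔ SimpleGraph.fromEdgeSet (segEdges H w α x s idx)) w (x 0) (x t)
      ≤ α * wDist G w (x 0) (x t) := by
  set H' := H ⊔ SimpleGraph.fromEdgeSet (segEdges H w α x s idx)
  have prefix_le : ∀ k ≤ s, wDist H' w (x (idx 0)) (x (idx k))
      ≤ α * wDist G w (x (idx 0)) (x (idx k)) := by
    intro k hk
    induction k with
    | zero => simp
    | succ k ih =>
      have hmono := (strictMonoOn_Iic_of_lt_succ hS.2.2.1).monotoneOn
      calc wDist H' w (x (idx 0)) (x (idx (k + 1)))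
          ≤ wDist H' w (x (idx 0)) (x (idx k)) + wDist H' w (x (idx k)) (x (idx (k + 1))) :=
            wDist_triangle
        _ ≤ α * wDist G w (x (idx 0)) (x (idx k))
              + α * wDist G w (x (idx k)) (x (idx (k + 1))) :=
            add_le_add (ih (by omega)) (hS.wDist_sup_segEdges_le hα hx hk)
        _ = α * wDist G w (x (idx 0)) (x (idx (k + 1))) := by
          rw [← mul_add, hx.wDist_add_wDist (hmono (by simp) (by simp; omega) (by omega))
            (hS.2.2.1 k hk).le (hS.idx_le hk)]
  simpa only [hS.1, hS.2.1] using prefix_le s le_rfl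

end Completion

lemma le_card_mul_pred_div_two_of_sym2_ne {V : Type*} [Fintype V] {M : ℕ} {p q : ℕ → V}
    (hne : ∀ i < M, p i ≠ q i)
    (hdistinct : ∀ i j, i < j → j < M → s(p i, q i) ≠ s(p j, q j)) :
    M ≤ Fintype.card V * (Fintype.card V - 1) / 2 := by
  classical
  let e : Fin M → {z : Sym2 V // ¬ z.IsDiag} :=
    fun i => ⟨s(p i, q i), Sym2.mk_isDiag_iff.not.mpr (hne i i.2)⟩
  have he : Function.Injective e := by
    intro i j hij
    rcases lt_trichotomy (i : ℕ) j with h | h | h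
    · exact absurd (congrArg Subtype.val hij) (hdistinct i j h j.2)
    · exact Fin.ext h
    · exact absurd (congrArg Subtype.val hij).symm (hdistinct j i h i.2)
  simpa only [Fintype.card_fin, Sym2.card_subtype_not_diag, Nat.choose_two_right]
    using Fintype.card_le_of_injective e he

theorem completion_terminates_and_correct_general {V : Type*} [Fintype V]
    (G : SimpleGraph V) (w : V → V → NNReal)
    (hsymm : ∀ u v, w u v = w v u)
    (α : NNReal) (hα : 1 ≤ α) (β : NNReal)
    (M : ℕ) (Hs : ℕ → SimpleGraph V)
    (p q : ℕ → V) (t : ℕ → ℕ) (xs : ℕ → ℕ → V) (s : ℕ → ℕ) (idx : ℕ → ℕ → ℕ)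
    (hstep : ∀ i, i < M →
      ((α : ℝ≥0∞) * wDist G w (p i) (q i) + (β : ℝ≥0∞) * (Wmax G w : ℝ≥0∞) <
          wDist (Hs i) w (p i) (q i)) ∧
      xs i 0 = p i ∧ xs i (t i) = q i ∧
      IsShortestPath G w (t i) (xs i) ∧
      IsMinimalSeg G (Hs i) w (α : ℝ≥0∞) (xs i) (t i) (s i) (idx i) ∧
      Hs (i + 1) = Hs i ⊔ SimpleGraph.fromEdgeSet
        (segEdges (Hs i) w (α : ℝ≥0∞) (xs i) (s i) (idx i))) :
    (∀ i j, i < j → j ≤ M →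
      wDist (Hs j) w (p i) (q i) ≤
        (α : ℝ≥0∞) * wDist G w (p i) (q i) + (β : ℝ≥0∞) * (Wmax G w : ℝ≥0∞)) ∧
    (∀ i j, i < j → j < M → s(p i, q i) ≠ s(p j, q j)) ∧
    M ≤ Fintype.card V * (Fintype.card V - 1) / 2 ∧
    ((∀ u v : V, ¬ ((α : ℝ≥0∞) * wDist G w u v + (β : ℝ≥0∞) * (Wmax G w : ℝ≥0∞) <
        wDist (Hs M) w u v)) →
      ∀ u v : V, wDist (Hs M) w u v ≤
        (α : ℝ≥0∞) * wDist G w u v + (β : ℝ≥0∞) * (Wmax G w : ℝ≥0∞)) := by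
  have hstretched : ∀ i j, i < j → j ≤ M →
      wDist (Hs j) w (p i) (q i) ≤
        (α : ℝ≥0∞) * wDist G w (p i) (q i) + (β : ℝ≥0∞) * (Wmax G w : ℝ≥0∞) := by
    intro i j hij hjM
    obtain ⟨-, hp, hq, hx, hS, hH⟩ := hstep i (hij.trans_le hjM)
    have hgrow : Hs (i + 1) ≤ Hs j := by
      induction j, hij using Nat.le_induction with
      | base => exact le_rfl
      | succ k hk ih =>
        exact (ih (by omega)).trans ((hstep k (by omega)).2.2.2.2.2 ▸ le_sup_left)
    calc wDist (Hs j) w (p i) (q i) ≤ wDist (Hs (i + 1)) w (p i) (q i) := wDist_anti hgrow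
      _ ≤ α * wDist G w (p i) (q i) := by
        simpa only [hH, hp, hq] using
          hS.1.wDist_sup_segEdges_endpoints_le (by exact_mod_cast hα) hx
      _ ≤ _ := le_self_add
  have hdistinct : ∀ i j, i < j → j < M → s(p i, q i) ≠ s(p j, q j) := by
    intro i j hij hjM hpq
    have hfixed := hstretched i j hij hjM.le
    rcases Sym2.eq_iff.mp hpq with ⟨hp, hq⟩ | ⟨hp, hq⟩
    · rw [hp, hq] at hfixed
      exact (hstep j hjM).1.not_ge hfixed
    · rw [hp, hq, wDist_comm hsymm, wDist_comm (G := G) hsymm] at hfixed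
      exact (hstep j hjM).1.not_ge hfixed
  have hne : ∀ i < M, p i ≠ q i := fun i hi hpq => by
    simpa [hpq] using (hstep i hi).1
  exact ⟨hstretched, hdistinct, le_card_mul_pred_div_two_of_sym2_ne hne hdistinct,
    fun h u v => not_lt.mp (h u v)⟩

/-- **Lemma (termination and correctness of the `(α,β)`-completion).**
Consider any execution `H_0 ⊆ H_1 ⊆ ⋯ ⊆ H_M` of the `(α,β)`-completion: at step `i < M`
a pair `(p i, q i)` with `dist_{H_i}(p i, q i) > α·dist_G(p i, q i) + β·W_max(G)` is picked,
a shortest `p i`–`q i` path `xs i` is chosen, a minimal `α`-segmentation of it w.r.t. `H_i`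
is computed, and `H_{i+1} = H_i ∪ E_α(S, H_i)`.  Then:
(1) every previously picked pair satisfies the target stretch at all later iterations;
(2) no pair is picked at two different iterations;
(3) the process performs at most `n(n-1)/2` iterations; and
(4) if no violating pair remains, the final graph is an `(α,β)`-spanner of `G`. -/
theorem completion_terminates_and_correct {V : Type*} [Fintype V]
    (G : SimpleGraph V) (w : V → V → NNReal)
    (hsymm : ∀ u v, w u v = w v u)
    (hpos : ∀ u v, G.Adj u v → 0 < w u v)
    (α : NNReal) (hα : 1 ≤ α) (β : NNReal)
    (M : ℕ) (Hs : ℕ → SimpleGraph V) (hH0 : Hs 0 ≤ G)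
    (p q : ℕ → V) (t : ℕ → ℕ) (xs : ℕ → ℕ → V) (s : ℕ → ℕ) (idx : ℕ → ℕ → ℕ)
    (hstep : ∀ i, i < M →
      ((α : ℝ≥0∞) * wDist G w (p i) (q i) + (β : ℝ≥0∞) * (Wmax G w : ℝ≥0∞) <
          wDist (Hs i) w (p i) (q i)) ∧
      xs i 0 = p i ∧ xs i (t i) = q i ∧
      IsShortestPath G w (t i) (xs i) ∧
      IsMinimalSeg G (Hs i) w (α : ℝ≥0∞) (xs i) (t i) (s i) (idx i) ∧
      Hs (i + 1) = Hs i ⊔ SimpleGraph.fromEdgeSet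
        (segEdges (Hs i) w (α : ℝ≥0∞) (xs i) (s i) (idx i))) :
    (∀ i j, i < j → j ≤ M →
      wDist (Hs j) w (p i) (q i) ≤
        (α : ℝ≥0∞) * wDist G w (p i) (q i) + (β : ℝ≥0∞) * (Wmax G w : ℝ≥0∞)) ∧
    (∀ i j, i < j → j < M → s(p i, q i) ≠ s(p j, q j)) ∧
    M ≤ Fintype.card V * (Fintype.card V - 1) / 2 ∧
    ((∀ u v : V, ¬ ((α : ℝ≥0∞) * wDist G w u v + (β : ℝ≥0∞) * (Wmax G w : ℝ≥0∞) <
        wDist (Hs M) w u v)) →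
      ∀ u v : V, wDist (Hs M) w u v ≤
        (α : ℝ≥0∞) * wDist G w u v + (β : ℝ≥0∞) * (Wmax G w : ℝ≥0∞)) :=
  completion_terminates_and_correct_general G w hsymm α hα β M Hs p q t xs s idx hstep
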